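/- Let T be a Lie algebra over F and Φ : L → T a Lie algebra homomorphism from the free Lie algebra L on generators α, β. Suppose that (i) the family consisting of Φ(β) together with the elements Φ((-ad β)^n(α)) for all n ∈ ℕ is a basis of T (it is linearly independent and spans T as an F-vector space), and (ii) [Φ(α), Φ((-ad β)^n(α))] = 0 for every n ∈ ℕ. Then the kernel of Φ equals the Lie ideal of L generated by the elements (ad α)((-ad β)^n(α)) for all integers n ≥ 1. -/

import Mathlib

noncomputable section

/-- The free Lie algebra on two generators. -/
abbrev FL (F : Type) [Field F] := FreeLieAlgebra F (Fin 2)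

/-- The generator `α`. -/
def FL.α (F : Type) [Field F] : FL F := FreeLieAlgebra.of F 0

/-- The generator `β`. -/
def FL.β (F : Type) [Field F] : FL F := FreeLieAlgebra.of F 1

/-- `(-ad β)^n (α)`, noting `(-ad β)(y) = -⁅β, y⁆ = ⁅y, β⁆`. -/
def FL.negAdBetaPowAlpha (F : Type) [Field F] (n : ℕ) : FL F :=
  (fun y => ⁅y, FL.β F⁆)^[n] (FL.α F)

/-!
Write `Xₙ = (-ad β)ⁿ(α)` and let `I` be the ideal generated by the `⁅α, Xₙ⁆`, `n ≥ 1`; hypothesis (ii)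
says `I ≤ ker Φ`. By the Jacobi identity and `⁅β, Xₙ⁆ = -Xₙ₊₁`, induction on `m` gives
`⁅Xₘ, Xₙ⁆ ∈ I` for all `m, n`, so `span {β, Xₙ} + I` is a Lie subalgebra; it contains `α = X₀`
and `β`, hence is all of `L`. By (i), `Φ` is injective on `span {β, Xₙ}`, and the modular law
gives `ker Φ = I`.
-/

open Submodule LieSubalgebra

section LieAlgebra

variable {R L : Type*} [CommRing R] [LieRing L] [LieAlgebra R L]

theorem LieSubalgebra.lieSpan_le_span_sup_of_forall_lie_mem {s : Set L} {I : LieIdeal R L}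
    (hs : ∀ x ∈ s, ∀ y ∈ s, ⁅x, y⁆ ∈ span R s ⊔ I.toSubmodule) :
    (lieSpan R L s).toSubmodule ≤ span R s ⊔ I.toSubmodule := by
  have hspan : span R (s ∪ I) = span R s ⊔ I.toSubmodule := by
    rw [Submodule.span_union]
    exact congrArg (span R s ⊔ ·) (span_eq I.toSubmodule)
  have hclosed : ∀ {x y}, x ∈ span R (s ∪ I) → y ∈ span R (s ∪ I) → ⁅x, y⁆ ∈ span R (s ∪ I) := by
    intro x y hx hy
    induction hx, hy using span_induction₂ with
    | mem_mem x y hx hy =>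
      rcases hx with hx | hx
      · rcases hy with hy | hy
        · exact hspan ▸ hs x hx y hy
        · exact subset_span (Or.inr (I.lie_mem hy))
      · exact subset_span (Or.inr (lie_mem_left R L I x y hx))
    | zero_left => simp
    | zero_right => simp
    | add_left _ _ _ _ _ _ hx hy => rw [add_lie]; exact add_mem hx hy
    | add_right _ _ _ _ _ _ hx hy => rw [lie_add]; exact add_mem hx hy
    | smul_left r _ _ _ _ h => rw [smul_lie]; exact smul_mem _ r h
    | smul_right r _ _ _ _ h => rw [lie_smul]; exact smul_mem _ r h
  let K : LieSubalgebra R L := { span R (s ∪ I) with lie_mem' := hclosed }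
  rw [← hspan]
  exact (lieSpan_le (K := K)).2 fun x hx => subset_span (Or.inl hx)

variable {X : ℕ → L} {b : L}

theorem lie_iterate_mem_of_lie_zero_mem (hX : ∀ n, X (n + 1) = ⁅X n, b⁆) {I : LieIdeal R L}
    (h : ∀ n, ⁅X 0, X (n + 1)⁆ ∈ I) (m n : ℕ) : ⁅X m, X n⁆ ∈ I := by
  induction m generalizing n with
  | zero =>
    cases n with
    | zero => simp
    | succ n => exact h n
  | succ m ih =>
    have hbX : ⁅b, X n⁆ = -X (n + 1) := by rw [hX, ← lie_skew]
    rw [hX, lie_lie, hbX, lie_neg]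
    exact sub_mem (neg_mem (ih (n + 1))) (I.lie_mem (ih n))

theorem lie_option_elim_mem_span_sup (hX : ∀ n, X (n + 1) = ⁅X n, b⁆) {I : LieIdeal R L}
    (h : ∀ n, ⁅X 0, X (n + 1)⁆ ∈ I) :
    ∀ x ∈ Set.range (fun o : Option ℕ => o.elim b X),
      ∀ y ∈ Set.range (fun o : Option ℕ => o.elim b X),
        ⁅x, y⁆ ∈ span R (Set.range fun o : Option ℕ => o.elim b X) ⊔ I.toSubmodule := by
  have hXmem : ∀ n, X n ∈ span R (Set.range fun o : Option ℕ => o.elim b X) :=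
    fun n => subset_span ⟨some n, rfl⟩
  rintro _ ⟨_ | m, rfl⟩ _ ⟨_ | n, rfl⟩
  · simp
  · show ⁅b, X n⁆ ∈ _
    rw [← lie_skew, ← hX]
    exact mem_sup_left (neg_mem (hXmem (n + 1)))
  · show ⁅X m, b⁆ ∈ _
    rw [← hX]
    exact mem_sup_left (hXmem (m + 1))
  · exact mem_sup_right (lie_iterate_mem_of_lie_zero_mem hX h m n)

end LieAlgebra

theorem FreeLieAlgebra.lieSpan_range_of (R X : Type*) [CommRing R] :
    lieSpan R (FreeLieAlgebra R X) (Set.range (of R)) = ⊤ := by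
  set K := lieSpan R (FreeLieAlgebra R X) (Set.range (of R))
  let g : FreeLieAlgebra R X →ₗ⁅R⁆ K := lift R fun x => ⟨of R x, subset_lieSpan ⟨x, rfl⟩⟩
  have hg : K.incl.comp g = LieHom.id (R := R) := hom_ext fun x => by simp [g]
  refine eq_top_iff.2 fun z _ => ?_
  rw [← LieHom.id_apply (R := R) z, ← hg]
  exact (g z).2

lemma FL.negAdBetaPowAlpha_succ (F : Type) [Field F] (n : ℕ) :
    FL.negAdBetaPowAlpha F (n + 1) = ⁅FL.negAdBetaPowAlpha F n, FL.β F⁆ :=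
  Function.iterate_succ_apply' _ _ _

theorem ker_eq_lie_ideal_of_basis_general (F : Type) [Field F]
    (T : Type) [LieRing T] [LieAlgebra F T] (Φ : FL F →ₗ⁅F⁆ T)
    (hli : LinearIndependent F fun o : Option ℕ =>
      o.elim (Φ (FL.β F)) fun n => Φ (FL.negAdBetaPowAlpha F n))
    (hcomm : ∀ n : ℕ, ⁅Φ (FL.α F), Φ (FL.negAdBetaPowAlpha F n)⁆ = 0) :
    Φ.ker = LieSubmodule.lieSpan F (FL F)
      {x | ∃ n : ℕ, 1 ≤ n ∧ x = ⁅FL.α F, FL.negAdBetaPowAlpha F n⁆} := by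
  set I := LieSubmodule.lieSpan F (FL F)
    {x | ∃ n : ℕ, 1 ≤ n ∧ x = ⁅FL.α F, FL.negAdBetaPowAlpha F n⁆}
  set v : Option ℕ → FL F := fun o => o.elim (FL.β F) (FL.negAdBetaPowAlpha F)
  have hI_le_ker : I ≤ Φ.ker := LieSubmodule.lieSpan_le.2 <| by
    rintro _ ⟨n, -, rfl⟩
    rw [SetLike.mem_coe, LieHom.mem_ker, LieHom.map_lie, hcomm]
  have hsup : span F (Set.range v) ⊔ I.toSubmodule = ⊤ := by
    have hgen : ∀ n, ⁅FL.α F, FL.negAdBetaPowAlpha F (n + 1)⁆ ∈ I :=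
      fun n => LieSubmodule.subset_lieSpan ⟨n + 1, n.succ_pos, rfl⟩
    refine top_le_iff.1 (le_trans ?_ (lieSpan_le_span_sup_of_forall_lie_mem
      (lie_option_elim_mem_span_sup (FL.negAdBetaPowAlpha_succ F) hgen)))
    rw [← LieSubalgebra.top_toSubmodule, ← FreeLieAlgebra.lieSpan_range_of,
      LieSubalgebra.toSubmodule_le_toSubmodule]
    refine lieSpan_mono (Set.range_subset_iff.2 fun i => ?_)
    fin_cases i
    exacts [⟨some 0, rfl⟩, ⟨none, rfl⟩]
  have hdisj : Disjoint (span F (Set.range v)) Φ.ker.toSubmodule :=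
    Φ.ker_toSubmodule ▸ range_ker_disjoint (by convert hli with o; cases o <;> rfl)
  rw [← LieSubmodule.toSubmodule_inj]
  refine (eq_of_le_of_inf_le_of_sup_le (z := span F (Set.range v)) hI_le_ker ?_ ?_).symm
  · exact hdisj.symm.le_bot.trans bot_le
  · rw [sup_comm I.toSubmodule, hsup]; exact le_top

/-- If `Φ : L → T` is a Lie algebra homomorphism such that the family consisting of
`Φ(β)` together with all `Φ((-ad β)^n(α))` is a basis of `T`, and `Φ(α)` commutes with
every `Φ((-ad β)^n(α))`, then `ker Φ` is the Lie ideal generated by the elements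
`(ad α)((-ad β)^n(α))`, `n ≥ 1`. -/
theorem ker_eq_lie_ideal_of_basis (F : Type) [Field F]
    (T : Type) [LieRing T] [LieAlgebra F T] (Φ : FL F →ₗ⁅F⁆ T)
    (hli : LinearIndependent F fun o : Option ℕ =>
      o.elim (Φ (FL.β F)) fun n => Φ (FL.negAdBetaPowAlpha F n))
    (hspan : Submodule.span F (Set.range fun o : Option ℕ =>
      o.elim (Φ (FL.β F)) fun n => Φ (FL.negAdBetaPowAlpha F n)) = ⊤)
    (hcomm : ∀ n : ℕ, ⁅Φ (FL.α F), Φ (FL.negAdBetaPowAlpha F n)⁆ = 0) :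
    Φ.ker = LieSubmodule.lieSpan F (FL F)
      {x | ∃ n : ℕ, 1 ≤ n ∧ x = ⁅FL.α F, FL.negAdBetaPowAlpha F n⁆} :=
  ker_eq_lie_ideal_of_basis_general F T Φ hli hcomm
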